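/- arXiv:2407.12222 — 5 statements merged into one kernel-verified Lean document; each statement's English description precedes it below -/
import Mathlib

section
/- For any nonzero integers ξ₁, ξ₂ with ξ₁+ξ₂ ≠ 0 and any integers η₁, η₂, |3ξ₁ξ₂(ξ₁+ξ₂) + (η₁ξ₂−η₂ξ₁)²/(ξ₁ξ₂(ξ₁+ξ₂))| ≥ N_max²·N_min, where N_max = max(|ξ₁|,|ξ₂|,|ξ₁+ξ₂|) and N_min = min(|ξ₁|,|ξ₂|,|ξ₁+ξ₂|). -/
lemma aux_maxmin (a b c : ℝ) (ha : 0 < a) (hb : 0 < b) (hc : 0 < c)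
    (h1 : a ≤ b + c) (h2 : b ≤ a + c) (h3 : c ≤ a + b) :
    max a (max b c) ^ 2 * min a (min b c) ≤ 3 * (a * b * c) := by
  rcases le_total a b with hab | hab <;> rcases le_total b c with hbc | hbc <;>
    rcases le_total a c with hac | hac <;>
    simp only [max_eq_left, max_eq_right, min_eq_left, min_eq_right,
      max_eq_left_iff, max_eq_right_iff, min_eq_left_iff, min_eq_right_iff, *] <;>
    nlinarith [mul_pos ha hb, mul_pos hb hc, mul_pos ha hc, mul_pos (mul_pos ha hb) hc]

/-- Lower bound on the KP-II resonance function: no cancellation between the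
two summands yields `|Ω| ≥ N_max² · N_min`. -/
theorem resonance_lower_bound (ξ₁ ξ₂ η₁ η₂ : ℤ) (h₁ : ξ₁ ≠ 0) (h₂ : ξ₂ ≠ 0)
    (h₃ : ξ₁ + ξ₂ ≠ 0) :
    |3 * (ξ₁ : ℝ) * ξ₂ * ((ξ₁ : ℝ) + ξ₂) +
        ((η₁ : ℝ) * ξ₂ - η₂ * ξ₁) ^ 2 / ((ξ₁ : ℝ) * ξ₂ * ((ξ₁ : ℝ) + ξ₂))| ≥
      max (|(ξ₁ : ℝ)|) (max (|(ξ₂ : ℝ)|) (|(ξ₁ : ℝ) + ξ₂|)) ^ 2 *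
        min (|(ξ₁ : ℝ)|) (min (|(ξ₂ : ℝ)|) (|(ξ₁ : ℝ) + ξ₂|)) := by
  have hx1 : (ξ₁ : ℝ) ≠ 0 := Int.cast_ne_zero.mpr h₁
  have hx2 : (ξ₂ : ℝ) ≠ 0 := Int.cast_ne_zero.mpr h₂
  have hx3 : (ξ₁ : ℝ) + ξ₂ ≠ 0 := by
    have : ((ξ₁ + ξ₂ : ℤ) : ℝ) ≠ 0 := Int.cast_ne_zero.mpr h₃
    push_cast at this; exact this
  set P : ℝ := (ξ₁ : ℝ) * ξ₂ * ((ξ₁ : ℝ) + ξ₂) with hP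
  set Q : ℝ := (η₁ : ℝ) * ξ₂ - η₂ * ξ₁ with hQ
  have hPne : P ≠ 0 := mul_ne_zero (mul_ne_zero hx1 hx2) hx3
  have ha : 0 < |(ξ₁ : ℝ)| := abs_pos.mpr hx1
  have hb : 0 < |(ξ₂ : ℝ)| := abs_pos.mpr hx2
  have hc : 0 < |(ξ₁ : ℝ) + ξ₂| := abs_pos.mpr hx3
  have h1 : |(ξ₁ : ℝ)| ≤ |(ξ₂ : ℝ)| + |(ξ₁ : ℝ) + ξ₂| := by
    calc |(ξ₁ : ℝ)| = |((ξ₁ : ℝ) + ξ₂) + (-ξ₂)| := by ring_nf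
      _ ≤ |(ξ₁ : ℝ) + ξ₂| + |(-ξ₂ : ℝ)| := abs_add_le _ _
      _ = |(ξ₂ : ℝ)| + |(ξ₁ : ℝ) + ξ₂| := by rw [abs_neg]; ring
  have h2 : |(ξ₂ : ℝ)| ≤ |(ξ₁ : ℝ)| + |(ξ₁ : ℝ) + ξ₂| := by
    calc |(ξ₂ : ℝ)| = |((ξ₁ : ℝ) + ξ₂) + (-ξ₁)| := by ring_nf
      _ ≤ |(ξ₁ : ℝ) + ξ₂| + |(-ξ₁ : ℝ)| := abs_add_le _ _
      _ = |(ξ₁ : ℝ)| + |(ξ₁ : ℝ) + ξ₂| := by rw [abs_neg]; ring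
  have h3 : |(ξ₁ : ℝ) + ξ₂| ≤ |(ξ₁ : ℝ)| + |(ξ₂ : ℝ)| := abs_add_le _ _
  have habs : |P| = |(ξ₁ : ℝ)| * |(ξ₂ : ℝ)| * |(ξ₁ : ℝ) + ξ₂| := by
    rw [hP, abs_mul, abs_mul]
  have key : 3 * |P| ≤ |3 * (ξ₁ : ℝ) * ξ₂ * ((ξ₁ : ℝ) + ξ₂) + Q ^ 2 / P| := by
    have hexpr : 3 * (ξ₁ : ℝ) * ξ₂ * ((ξ₁ : ℝ) + ξ₂) = 3 * P := by rw [hP]; ring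
    rw [hexpr]
    rcases lt_or_gt_of_ne hPne with hneg | hpos
    · have hq : Q ^ 2 / P ≤ 0 := div_nonpos_of_nonneg_of_nonpos (sq_nonneg Q) hneg.le
      have : 3 * P + Q ^ 2 / P ≤ 0 := by linarith
      rw [abs_of_nonpos this, abs_of_neg hneg]; linarith
    · have hq : 0 ≤ Q ^ 2 / P := div_nonneg (sq_nonneg Q) hpos.le
      have : 0 ≤ 3 * P + Q ^ 2 / P := by positivity
      rw [abs_of_nonneg this, abs_of_pos hpos]; linarith
  have hmm := aux_maxmin _ _ _ ha hb hc h1 h2 h3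
  calc max (|(ξ₁ : ℝ)|) (max (|(ξ₂ : ℝ)|) (|(ξ₁ : ℝ) + ξ₂|)) ^ 2 *
        min (|(ξ₁ : ℝ)|) (min (|(ξ₂ : ℝ)|) (|(ξ₁ : ℝ) + ξ₂|))
      ≤ 3 * (|(ξ₁ : ℝ)| * |(ξ₂ : ℝ)| * |(ξ₁ : ℝ) + ξ₂|) := hmm
    _ = 3 * |P| := by rw [habs]
    _ ≤ _ := key
end

section
/- The two terms of the KP-II resonance function never cancel: for nonzero integers ξ₁, ξ₂ with ξ₁+ξ₂ ≠ 0 and any integers η₁, η₂, the quantities 3ξ₁ξ₂(ξ₁+ξ₂) and (η₁ξ₂−η₂ξ₁)²/(ξ₁ξ₂(ξ₁+ξ₂)) have the same sign (or the second is zero), hence |Ω| ≥ 3|ξ₁ξ₂(ξ₁+ξ₂)|. -/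
/-!
Write `D = ξ₁ξ₂(ξ₁+ξ₂)` and `N = η₁ξ₂ - η₂ξ₁`. The product of the two terms is
`3D · N²/D = 3N² ≥ 0`, so they have the same sign and `|3D + N²/D| = |3D| + |N²/D| ≥ 3|D|`.
-/

section SameSign

variable {α : Type*} [Field α] [LinearOrder α] [IsStrictOrderedRing α]

lemma mul_mul_div_self_nonneg {b c : α} (hc : 0 ≤ c) (hb : 0 ≤ b) (a : α) :
    0 ≤ c * a * (b / a) := by
  rcases eq_or_ne a 0 with rfl | ha
  · simp
  · rw [mul_assoc, mul_div_cancel₀ b ha]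
    exact mul_nonneg hc hb

lemma abs_add_eq_abs_add_abs_of_mul_nonneg {x y : α} (h : 0 ≤ x * y) :
    |x + y| = |x| + |y| :=
  (abs_add_eq_add_abs_iff x y).mpr (mul_nonneg_iff.mp h)

lemma mul_abs_le_abs_mul_add_div_self {b c : α} (hc : 0 ≤ c) (hb : 0 ≤ b) (a : α) :
    c * |a| ≤ |c * a + b / a| := by
  rw [abs_add_eq_abs_add_abs_of_mul_nonneg (mul_mul_div_self_nonneg hc hb a), abs_mul,
    abs_of_nonneg hc]
  exact le_add_of_nonneg_right (abs_nonneg _)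

end SameSign

theorem resonance_no_cancellation_general (ξ₁ ξ₂ η₁ η₂ : ℤ) :
    (0 ≤ (3 * (ξ₁ : ℝ) * ξ₂ * ((ξ₁ : ℝ) + ξ₂)) *
        (((η₁ : ℝ) * ξ₂ - η₂ * ξ₁) ^ 2 / ((ξ₁ : ℝ) * ξ₂ * ((ξ₁ : ℝ) + ξ₂)))) ∧
    |3 * (ξ₁ : ℝ) * ξ₂ * ((ξ₁ : ℝ) + ξ₂) +
        ((η₁ : ℝ) * ξ₂ - η₂ * ξ₁) ^ 2 / ((ξ₁ : ℝ) * ξ₂ * ((ξ₁ : ℝ) + ξ₂))| ≥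
      3 * |(ξ₁ : ℝ) * ξ₂ * ((ξ₁ : ℝ) + ξ₂)| := by
  have hfactor : 3 * (ξ₁ : ℝ) * ξ₂ * ((ξ₁ : ℝ) + ξ₂) =
      3 * ((ξ₁ : ℝ) * ξ₂ * ((ξ₁ : ℝ) + ξ₂)) := by
    ring
  rw [hfactor]
  have hN := sq_nonneg ((η₁ : ℝ) * ξ₂ - η₂ * ξ₁)
  exact ⟨mul_mul_div_self_nonneg zero_le_three hN _,
    mul_abs_le_abs_mul_add_div_self zero_le_three hN _⟩

/-- The two terms of the KP-II resonance function never cancel: the second term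
has the same sign as the first (or vanishes), hence `|Ω| ≥ 3|ξ₁ξ₂(ξ₁+ξ₂)|`. -/
theorem resonance_no_cancellation (ξ₁ ξ₂ η₁ η₂ : ℤ) (h₁ : ξ₁ ≠ 0) (h₂ : ξ₂ ≠ 0)
    (h₃ : ξ₁ + ξ₂ ≠ 0) :
    (0 ≤ (3 * (ξ₁ : ℝ) * ξ₂ * ((ξ₁ : ℝ) + ξ₂)) *
        (((η₁ : ℝ) * ξ₂ - η₂ * ξ₁) ^ 2 / ((ξ₁ : ℝ) * ξ₂ * ((ξ₁ : ℝ) + ξ₂)))) ∧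
    |3 * (ξ₁ : ℝ) * ξ₂ * ((ξ₁ : ℝ) + ξ₂) +
        ((η₁ : ℝ) * ξ₂ - η₂ * ξ₁) ^ 2 / ((ξ₁ : ℝ) * ξ₂ * ((ξ₁ : ℝ) + ξ₂))| ≥
      3 * |(ξ₁ : ℝ) * ξ₂ * ((ξ₁ : ℝ) + ξ₂)| :=
  resonance_no_cancellation_general ξ₁ ξ₂ η₁ η₂
end

section
/- Second-order counting lemma: let f : ℝ → ℝ be twice differentiable on an interval I with |f''(x)| ≥ c > 0 for all x ∈ I, and let J be an interval of length L. Then the set {x ∈ I ∩ ℤ : f(x) ∈ J} has cardinality at most C(1 + (L/c)^{1/2}) for an absolute constant C (one may take C = 4). -/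
/-!
If `|f''| ≥ c` on the interval `I`, then `f''` has constant sign there, so after replacing `f`
by `-f` the function `f` is `c`-strongly convex on `I`. For `x < y < z` in `I` with `f x`, `f y`,
`f z` in a window of length `L`, comparing `f y` with the chord from `x` to `z` then gives
`c (y - x) (z - y) ≤ 2 L`. Applied to the smallest, the largest and any intermediate integer
`q`, this forces `q` to lie within `√(2L/c)` of one of the two extremes, so there are at most
`2 + 2 √(2L/c)` integers.
-/

open Set

theorem IsPreconnected.forall_le_or_forall_le_neg {X : Type*} [TopologicalSpace X] {s : Set X}
    (hs : IsPreconnected s) {g : X → ℝ} (hg : ContinuousOn g s) {c : ℝ} (hc : 0 < c)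
    (h : ∀ x ∈ s, c ≤ |g x|) : (∀ x ∈ s, c ≤ g x) ∨ ∀ x ∈ s, g x ≤ -c := by
  by_contra! ⟨⟨u, hu, hgu⟩, ⟨v, hv, hgv⟩⟩
  have hgu' : g u ≤ -c := by rcases le_abs'.mp (h u hu) with h' | h' <;> linarith
  have hgv' : c ≤ g v := by rcases le_abs'.mp (h v hv) with h' | h' <;> linarith
  obtain ⟨w, hw, hgw⟩ := hs.intermediate_value hu hv hg
    (show (0 : ℝ) ∈ Icc (g u) (g v) from ⟨by linarith, by linarith⟩)
  have := h w hw
  rw [hgw, abs_zero] at this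
  linarith

theorem strongConvexOn_of_le_iteratedDeriv_two {D : Set ℝ} (hD : Convex ℝ D) {f : ℝ → ℝ}
    (hf : ContDiff ℝ 2 f) {m : ℝ} (h : ∀ x ∈ D, m ≤ iteratedDeriv 2 f x) :
    StrongConvexOn D m f := by
  have hf₁ : ContDiff ℝ 1 (deriv f) := (contDiff_succ_iff_deriv (n := 1).mp hf).2.2
  have hd : ∀ x, HasDerivAt (fun y => f y - m / 2 * y ^ 2) (deriv f x - m * x) x := fun x => by
    refine ((hf.differentiable two_ne_zero x).hasDerivAt.fun_sub
      ((hasDerivAt_pow 2 x).const_mul (m / 2))).congr_deriv ?_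
    norm_num
    ring
  have hd' : ∀ x, HasDerivAt (fun y => deriv f y - m * y) (iteratedDeriv 2 f x - m) x := by
    intro x
    rw [iteratedDeriv_succ, iteratedDeriv_one]
    simpa using (hf₁.differentiable one_ne_zero x).hasDerivAt.fun_sub
      ((hasDerivAt_id x).const_mul m)
  rw [strongConvexOn_iff_convex]
  simp only [Real.norm_eq_abs, sq_abs]
  exact convexOn_of_hasDerivWithinAt2_nonneg hD (hf.continuous.sub (by fun_prop)).continuousOn
    (fun x _ => (hd x).hasDerivWithinAt) (fun x _ => (hd' x).hasDerivWithinAt)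
    fun x hx => sub_nonneg.2 (h x (interior_subset hx))

theorem StrongConvexOn.mul_sub_mul_sub_le {s : Set ℝ} {m : ℝ} {f : ℝ → ℝ}
    (hf : StrongConvexOn s m f) {x y z : ℝ} (hx : x ∈ s) (hz : z ∈ s) (hxy : x < y)
    (hyz : y < z) {a L : ℝ} (hfx : f x ≤ a + L) (hfy : a ≤ f y) (hfz : f z ≤ a + L) :
    m / 2 * ((y - x) * (z - y)) ≤ L := by
  have hxz : z - x ≠ 0 := by linarith
  set α := (z - y) / (z - x)
  set β := (y - x) / (z - x)
  have hα : 0 ≤ α := div_nonneg (by linarith) (by linarith)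
  have hβ : 0 ≤ β := div_nonneg (by linarith) (by linarith)
  have hαβ : α + β = 1 := by simp only [α, β]; field_simp; ring
  have hy : α • x + β • z = y := by simp only [α, β, smul_eq_mul]; field_simp; ring
  have hw : α * β * (m / 2 * ‖x - z‖ ^ 2) = m / 2 * ((y - x) * (z - y)) := by
    rw [Real.norm_eq_abs, sq_abs]; simp only [α, β]; field_simp; ring
  have hchord := hf.2 hx hz hα hβ hαβ
  rw [hy, hw, smul_eq_mul, smul_eq_mul] at hchord
  have hband : α * (a + L) + β * (a + L) = a + L := by rw [← add_mul, hαβ, one_mul]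
  nlinarith [mul_le_mul_of_nonneg_left hfx hα, mul_le_mul_of_nonneg_left hfz hβ]

theorem Int.finset_card_le_of_mul_sub_le {s : Finset ℤ} {K : ℝ}
    (h : ∀ p ∈ s, ∀ q ∈ s, ∀ r ∈ s, p < q → q < r → ((q : ℝ) - p) * ((r : ℝ) - q) ≤ K) :
    (s.card : ℝ) ≤ 2 + 2 * √K := by
  rcases s.eq_empty_or_nonempty with rfl | hs
  · simp only [Finset.card_empty, Nat.cast_zero]
    positivity
  set p := s.min' hs
  set r := s.max' hs
  set k := ⌊√K⌋₊
  have hsub : s ⊆ Finset.Icc p (p + k) ∪ Finset.Icc (r - k) r := by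
    intro q hq
    have hpq : p ≤ q := s.min'_le q hq
    have hqr : q ≤ r := s.le_max' q hq
    simp only [Finset.mem_union, Finset.mem_Icc, hpq, hqr, true_and, and_true]
    by_contra! ⟨hpk, hrk⟩
    have hqp : (k : ℝ) + 1 ≤ (q : ℝ) - p := by exact_mod_cast (by omega : (k : ℤ) + 1 ≤ q - p)
    have hrq : (k : ℝ) + 1 ≤ (r : ℝ) - q := by exact_mod_cast (by omega : (k : ℤ) + 1 ≤ r - q)
    have hK := h p (s.min'_mem hs) q hq r (s.max'_mem hs) (by omega) (by omega)
    exact (Nat.lt_floor_add_one √K).not_ge (Real.le_sqrt_of_sq_le (by nlinarith))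
  have hcard : s.card ≤ 2 * k + 2 :=
    calc s.card ≤ (Finset.Icc p (p + k) ∪ Finset.Icc (r - k) r).card := Finset.card_le_card hsub
      _ ≤ (Finset.Icc p (p + k)).card + (Finset.Icc (r - k) r).card := Finset.card_union_le _ _
      _ = 2 * k + 2 := by simp only [Int.card_Icc]; omega
  have hk : (k : ℝ) ≤ √K := Nat.floor_le (Real.sqrt_nonneg K)
  have : (s.card : ℝ) ≤ 2 * k + 2 := by exact_mod_cast hcard
  linarith

theorem Int.natCard_le_of_mul_sub_le {S : Set ℤ} {K : ℝ}
    (h : ∀ p ∈ S, ∀ q ∈ S, ∀ r ∈ S, p < q → q < r → ((q : ℝ) - p) * ((r : ℝ) - q) ≤ K) :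
    (Nat.card S : ℝ) ≤ 2 + 2 * √K := by
  rcases S.finite_or_infinite with hS | hS
  · lift S to Finset ℤ using hS
    rw [Nat.card_coe_set_eq, ncard_coe_finset]
    exact Int.finset_card_le_of_mul_sub_le h
  · have := hS.to_subtype
    rw [Nat.card_eq_zero_of_infinite, Nat.cast_zero]
    positivity

theorem natCard_int_mem_Icc_le_of_le_iteratedDeriv_two {f : ℝ → ℝ} {I : Set ℝ}
    (hI : I.OrdConnected) (hf : ContDiff ℝ 2 f) {c : ℝ} (hc : 0 < c)
    (hder : ∀ x ∈ I, c ≤ iteratedDeriv 2 f x) (a L : ℝ) :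
    (Nat.card {x : ℤ | (x : ℝ) ∈ I ∧ f x ∈ Icc a (a + L)} : ℝ) ≤ 2 + 2 * √(2 * (L / c)) := by
  have hconv := strongConvexOn_of_le_iteratedDeriv_two hI.convex hf hder
  refine Int.natCard_le_of_mul_sub_le fun p hp q hq r hr hpq hqr => ?_
  have := hconv.mul_sub_mul_sub_le hp.1 hr.1 (Int.cast_lt.2 hpq) (Int.cast_lt.2 hqr)
    hp.2.2 hq.2.1 hr.2.2
  rw [← mul_div_assoc, le_div_iff₀ hc]
  linarith

theorem counting_second_order_general (f : ℝ → ℝ) (I : Set ℝ) (hI : I.OrdConnected)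
    (hf : ContDiff ℝ 2 f) (c L a : ℝ) (hc : 0 < c)
    (hder : ∀ x ∈ I, c ≤ |iteratedDeriv 2 f x|) :
    (Nat.card {x : ℤ | (x : ℝ) ∈ I ∧ f (x : ℝ) ∈ Set.Icc a (a + L)} : ℝ) ≤
      4 * (1 + Real.sqrt (L / c)) := by
  have hcount : (Nat.card {x : ℤ | (x : ℝ) ∈ I ∧ f x ∈ Icc a (a + L)} : ℝ) ≤
      2 + 2 * √(2 * (L / c)) := by
    rcases hI.isPreconnected.forall_le_or_forall_le_neg
      (hf.continuous_iteratedDeriv 2 le_rfl).continuousOn hc hder with hpos | hneg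
    · exact natCard_int_mem_Icc_le_of_le_iteratedDeriv_two hI hf hc hpos a L
    · have hset : {x : ℤ | (x : ℝ) ∈ I ∧ (-f) x ∈ Icc (-(a + L)) (-(a + L) + L)} =
          {x : ℤ | (x : ℝ) ∈ I ∧ f x ∈ Icc a (a + L)} := by
        ext x
        simp only [mem_ofPred_eq, Pi.neg_apply, mem_Icc]
        constructor <;> rintro ⟨hx, h₁, h₂⟩ <;> exact ⟨hx, by linarith, by linarith⟩
      rw [← hset]
      refine natCard_int_mem_Icc_le_of_le_iteratedDeriv_two hI hf.neg hc (fun x hx => ?_) _ L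
      rw [iteratedDeriv_fun_neg]
      linarith [hneg x hx]
  have hsqrt2 : √(2 * (L / c)) ≤ 2 * √(L / c) := by
    rw [Real.sqrt_mul zero_le_two]
    gcongr
    exact Real.sqrt_le_iff.2 ⟨zero_le_two, by norm_num⟩
  linarith

/-- Second-order counting lemma: a function whose second derivative is bounded
below in absolute value by `c > 0` on an interval `I` can send at most
`4(1 + (L/c)^{1/2})` integers of `I` into an interval `J` of length `L`. -/
theorem counting_second_order (f : ℝ → ℝ) (I : Set ℝ) (hI : I.OrdConnected)
    (hf : ContDiff ℝ 2 f) (c L a : ℝ) (hc : 0 < c) (hL : 0 ≤ L)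
    (hder : ∀ x ∈ I, c ≤ |iteratedDeriv 2 f x|) :
    (Nat.card {x : ℤ | (x : ℝ) ∈ I ∧ f (x : ℝ) ∈ Set.Icc a (a + L)} : ℝ) ≤
      4 * (1 + Real.sqrt (L / c)) :=
  counting_second_order_general f I hI hf c L a hc hder
end

section
/- Cubic coefficient lower bound for line restrictions of the KP-II surface (case |ξ'| ≳ 1): let ξ₀, η₀, ξ₁, η₁, ξ', η' be real numbers with |ξ₀| ∈ [1/2, 2], |η₀| ≤ 2, (ξ')² + (η')² = 1 and |ξ'| ≥ c₀ > 0. Set \bar{η} = η₀ − (η'/ξ')ξ₀. Then the Taylor coefficients of t ↦ ω(ξ₀ + tξ', \tilde{η}(t)) around t = 0 (after the Galilean reduction η ↦ η − (η'/ξ')ξ) are a₂ = (ξ')² ξ₀ (3 − \bar{η}²/ξ₀⁴) and a₃ = (ξ')³ (1 + \bar{η}²/ξ₀⁴), and in particular |a₃| ≥ c₀³. -/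
/-- The KP-II dispersion relation `ω(ξ,η) = ξ³ − η²/ξ`. -/
noncomputable def omegaKP (ξ η : ℝ) : ℝ := ξ ^ 3 - η ^ 2 / ξ

/-! Along the line, `ω = u³ − η̄²/u` with `u = ξ₀ + tξ'` affine in `t`, so every derivative is
explicit: the `k`-th one is `ξ'ᵏ` times the `k`-th derivative of `u³ − η̄²u⁻¹` in `u`. At `k = 3`
this is `6ξ'³(1 + η̄²/ξ₀⁴)`, whose second factor is at least `1`, whence `|a₃| ≥ |ξ'|³ ≥ c₀³`. -/

open Nat

section affine

variable {𝕜 : Type*} [NontriviallyNormedField 𝕜]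

theorem iteratedDeriv_affine_pow (n k : ℕ) (a b x : 𝕜) :
    iteratedDeriv k (fun t => (a + t * b) ^ n) x =
      n.descFactorial k * b ^ k * (a + x * b) ^ (n - k) := by
  have h := iteratedDeriv_comp_const_mul (n := k) (f := fun y : 𝕜 => (a + y) ^ n) (by fun_prop) b
  have hs := iteratedDeriv_comp_const_add k (fun y : 𝕜 => y ^ n) a
  simp only [mul_comm _ b]
  rw [h]
  simp only [hs, iteratedDeriv_pow]
  ring

theorem iteratedDeriv_affine_inv (k : ℕ) (a b x : 𝕜) :
    iteratedDeriv k (fun t => (a + t * b)⁻¹) x =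
      (-1) ^ k * k ! * b ^ k * (a + x * b) ^ (-1 - k : ℤ) := by
  have h := congr_fun (iter_deriv_inv_linear k b a) x
  simp only [add_comm a, mul_comm _ b, iteratedDeriv_eq_iterate, h]

end affine

theorem iteratedDeriv_omegaKP_line (n : ℕ) (a b η x : ℝ) (hx : a + x * b ≠ 0) :
    iteratedDeriv n (fun t => omegaKP (a + t * b) η) x =
      b ^ n * ((descFactorial 3 n : ℝ) * (a + x * b) ^ (3 - n) -
        (-1) ^ n * n ! * η ^ 2 * (a + x * b) ^ (-1 - n : ℤ)) := by
  have hsplit : (fun t => omegaKP (a + t * b) η) =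
      fun t => (a + t * b) ^ 3 - η ^ 2 * (a + t * b)⁻¹ := by
    funext t; simp only [omegaKP, div_eq_mul_inv]
  rw [hsplit, iteratedDeriv_fun_sub (by fun_prop) (by fun_prop (disch := assumption)),
    iteratedDeriv_const_mul_field, iteratedDeriv_affine_pow, iteratedDeriv_affine_inv]
  ring

theorem pow_le_abs_pow_mul_one_add {c b s : ℝ} (n : ℕ) (hc : 0 ≤ c) (hcb : c ≤ |b|) (hs : 0 ≤ s) :
    c ^ n ≤ |b ^ n * (1 + s)| := by
  rw [abs_mul, abs_pow, abs_of_pos (show 0 < 1 + s by linarith)]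
  calc c ^ n ≤ |b| ^ n := pow_le_pow_left₀ hc hcb n
    _ ≤ |b| ^ n * (1 + s) := le_mul_of_one_le_right (by positivity) (by linarith)

theorem flat_sets_cubic_coefficient_general (ξ₀ η₀ ξ' η' c₀ : ℝ)
    (hξ₀ : |ξ₀| ∈ Set.Icc (1/2 : ℝ) 2)
    (hc₀ : 0 < c₀) (hξ' : c₀ ≤ |ξ'|) :
    iteratedDeriv 2 (fun t : ℝ => omegaKP (ξ₀ + t * ξ') (η₀ - η' / ξ' * ξ₀)) 0 =
      2 * (ξ' ^ 2 * ξ₀ * (3 - (η₀ - η' / ξ' * ξ₀) ^ 2 / ξ₀ ^ 4)) ∧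
    iteratedDeriv 3 (fun t : ℝ => omegaKP (ξ₀ + t * ξ') (η₀ - η' / ξ' * ξ₀)) 0 =
      6 * (ξ' ^ 3 * (1 + (η₀ - η' / ξ' * ξ₀) ^ 2 / ξ₀ ^ 4)) ∧
    c₀ ^ 3 ≤ |ξ' ^ 3 * (1 + (η₀ - η' / ξ' * ξ₀) ^ 2 / ξ₀ ^ 4)| := by
  have hξ₀0 : ξ₀ ≠ 0 := by
    rintro rfl
    norm_num at hξ₀
  have hbase : ξ₀ + 0 * ξ' ≠ 0 := by simpa using hξ₀0
  refine ⟨?_, ?_, pow_le_abs_pow_mul_one_add 3 hc₀.le hξ' (by positivity)⟩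
  · rw [iteratedDeriv_omegaKP_line 2 _ _ _ _ hbase]
    norm_num [descFactorial, factorial]
    field_simp
    ring
  · rw [iteratedDeriv_omegaKP_line 3 _ _ _ _ hbase]
    norm_num [descFactorial, factorial]
    field_simp

/-- Cubic coefficient lower bound for line restrictions of the KP-II surface in
directions with `|ξ'| ≳ 1`: after the Galilean reduction, the quadratic and
cubic Taylor coefficients of `t ↦ ω(ξ₀ + tξ', η̄)` at `t = 0` are the stated
expressions, and the cubic one is bounded below by `c₀³`. -/
theorem flat_sets_cubic_coefficient (ξ₀ η₀ ξ' η' c₀ : ℝ)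
    (hξ₀ : |ξ₀| ∈ Set.Icc (1/2 : ℝ) 2) (hη₀ : |η₀| ≤ 2)
    (hunit : ξ' ^ 2 + η' ^ 2 = 1) (hc₀ : 0 < c₀) (hξ' : c₀ ≤ |ξ'|) :
    iteratedDeriv 2 (fun t : ℝ => omegaKP (ξ₀ + t * ξ') (η₀ - η' / ξ' * ξ₀)) 0 =
      2 * (ξ' ^ 2 * ξ₀ * (3 - (η₀ - η' / ξ' * ξ₀) ^ 2 / ξ₀ ^ 4)) ∧
    iteratedDeriv 3 (fun t : ℝ => omegaKP (ξ₀ + t * ξ') (η₀ - η' / ξ' * ξ₀)) 0 =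
      6 * (ξ' ^ 3 * (1 + (η₀ - η' / ξ' * ξ₀) ^ 2 / ξ₀ ^ 4)) ∧
    c₀ ^ 3 ≤ |ξ' ^ 3 * (1 + (η₀ - η' / ξ' * ξ₀) ^ 2 / ξ₀ ^ 4)| :=
  flat_sets_cubic_coefficient_general ξ₀ η₀ ξ' η' c₀ hξ₀ hc₀ hξ'
end

section
/- Sharpness example lower bound: let N ≥ 1 and let f : 𝕋² → ℂ have Fourier coefficients \hat{f}(ξ,η) = 1 when ξ = N and 0 ≤ η ≤ N^{1/2} (η integer), and 0 otherwise. Then ‖f‖_{L²(𝕋²)} ∼ N^{1/4}, and for all t with |t| ≤ c/N (c small absolute constant) and all x, |S_KP(t)f(x,y)| = |Σ_{η=0}^{⌊N^{1/2}⌋} e^{i(yη − tη²/N)}|, whose L⁴_y(𝕋) norm is ≥ c' N^{3/8}. Consequently ‖S_KP(t)f‖_{L⁴([0,1]×𝕋²)} ≥ c'' N^{1/8} ‖f‖_{L²(𝕋²)}. -/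
/-!
Up to the unimodular factor `e^{i(xN + tN³)}`, both `f` and `S_KP(t) f` are one-dimensional sums
over `0 ≤ η ≤ K = ⌊√N⌋`: the Dirichlet sum `∑ e^{iyη}`, whose `L²` norm is `√(2π(K+1))` by
orthogonality of the characters, and the Schrödinger sum `∑ e^{i(yη - tη²/N)}`. Since
`η² ≤ K² ≤ N`, for `|t| ≤ 1` (not only `|t| ≤ c/N`) and `0 ≤ y ≤ 1/(8(K+1))` every phase has
modulus at most `9/8`, so nothing cancels and the sum has modulus at least
`(K+1) cos(9/8) ≥ (K+1)/3`. Integrating its fourth power over that interval gives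
`≳ (K+1)³ ∼ N^{3/2}`, against `‖f‖_{L²}⁴ ∼ N`.
-/

open Complex Finset
open scoped Real

theorem integral_exp_int_mul_I_mul (k : ℤ) :
    ∫ y in (0 : ℝ)..2 * π, exp (k * I * y) = if k = 0 then 2 * (π : ℂ) else 0 := by
  split_ifs with hk
  · simp [hk]
  have hkI : (k : ℂ) * I ≠ 0 := mul_ne_zero (Int.cast_ne_zero.mpr hk) I_ne_zero
  rw [integral_exp_mul_complex hkI, ofReal_zero, mul_zero, exp_zero]
  push_cast
  rw [show (k : ℂ) * I * (2 * π) = k * (2 * π * I) by ring,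
    exp_int_mul_two_pi_mul_I, sub_self, zero_div]

theorem integral_norm_sum_mul_exp_sq (s : Finset ℤ) (c : ℤ → ℂ) :
    ∫ y in (0 : ℝ)..2 * π, ‖∑ n ∈ s, c n * exp (I * (y * n))‖ ^ 2 =
      2 * π * ∑ n ∈ s, ‖c n‖ ^ 2 := by
  have hexpand : ∀ y : ℝ, ((‖∑ n ∈ s, c n * exp (I * (y * n))‖ ^ 2 : ℝ) : ℂ) =
      ∑ a ∈ s, ∑ b ∈ s, c a * (starRingEnd ℂ) (c b) * exp (((a - b : ℤ) : ℂ) * I * y) := by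
    intro y
    rw [← normSq_eq_norm_sq, ← mul_conj, map_sum, sum_mul_sum]
    refine sum_congr rfl fun a _ => sum_congr rfl fun b _ => ?_
    rw [map_mul, ← exp_conj, mul_mul_mul_comm, ← exp_add]
    congr 2
    simp only [map_mul, conj_I, conj_ofReal, map_intCast]
    push_cast
    ring
  have hint : ∀ k : ℤ, IntervalIntegrable (fun y : ℝ => exp (k * I * y)) MeasureTheory.volume
      0 (2 * π) := fun k => (by fun_prop : Continuous _).intervalIntegrable _ _
  apply ofReal_injective
  rw [← intervalIntegral.integral_ofReal]
  simp_rw [hexpand]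
  rw [intervalIntegral.integral_finsetSum fun a _ =>
    (by fun_prop : Continuous _).intervalIntegrable _ _]
  simp_rw [intervalIntegral.integral_finsetSum fun b _ => (hint _).const_mul _,
    intervalIntegral.integral_const_mul, integral_exp_int_mul_I_mul, sub_eq_zero]
  simp only [mul_ite, mul_zero, sum_ite_eq]
  rw [sum_congr rfl fun a ha => if_pos ha]
  push_cast
  simp only [mul_sum, mul_conj, normSq_eq_norm_sq]
  exact sum_congr rfl fun a _ => by push_cast; ring

theorem norm_sum_exp_I_mul_ofReal_add {ι : Type*} (s : Finset ι) (a : ℝ) (g : ι → ℂ) :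
    ‖∑ i ∈ s, exp (I * (a + g i))‖ = ‖∑ i ∈ s, exp (I * g i)‖ := by
  simp_rw [mul_add, exp_add, ← mul_sum, norm_mul, mul_comm I, norm_exp_ofReal_mul_I, one_mul]

theorem card_mul_cos_le_norm_sum_exp {ι : Type*} (s : Finset ι) (θ : ι → ℝ) {r : ℝ}
    (hr : r ≤ π) (hθ : ∀ i ∈ s, |θ i| ≤ r) :
    #s * Real.cos r ≤ ‖∑ i ∈ s, exp (θ i * I)‖ :=
  calc #s * Real.cos r = ∑ _i ∈ s, Real.cos r := by rw [sum_const, nsmul_eq_mul]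
    _ ≤ ∑ i ∈ s, Real.cos (θ i) := sum_le_sum fun i hi => by
        rw [← Real.cos_abs (θ i)]
        exact Real.cos_le_cos_of_nonneg_of_le_pi (abs_nonneg _) hr (hθ i hi)
    _ = (∑ i ∈ s, exp (θ i * I)).re := by simp_rw [re_sum, exp_ofReal_mul_I_re]
    _ ≤ ‖∑ i ∈ s, exp (θ i * I)‖ := re_le_norm _

theorem mul_le_integral_of_le_on_Icc {g : ℝ → ℝ} (hg : Continuous g) {a b M : ℝ}
    (ha : 0 ≤ a) (hab : a ≤ b) (hM : ∀ y ∈ Set.Icc 0 a, M ≤ g y)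
    (hg0 : ∀ y ∈ Set.Icc a b, 0 ≤ g y) :
    a * M ≤ ∫ y in (0 : ℝ)..b, g y := by
  rw [← intervalIntegral.integral_add_adjacent_intervals (b := a) (hg.intervalIntegrable _ _)
    (hg.intervalIntegrable _ _)]
  have hconst : a * M ≤ ∫ y in (0 : ℝ)..a, g y := by
    simpa using intervalIntegral.integral_mono_on (μ := MeasureTheory.volume) ha
      intervalIntegrable_const (hg.intervalIntegrable _ _) hM
  linarith [intervalIntegral.integral_nonneg (μ := MeasureTheory.volume) hab hg0]

noncomputable def schrodingerSum (N m : ℕ) (t y : ℝ) : ℂ :=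
  ∑ η ∈ range m, exp (I * ((y : ℂ) * (η : ℂ) - (t : ℂ) * (η : ℂ) ^ 2 / (N : ℂ)))

theorem continuous_schrodingerSum (N m : ℕ) :
    Continuous fun p : ℝ × ℝ => schrodingerSum N m p.1 p.2 := by
  unfold schrodingerSum; fun_prop

theorem norm_kpEvolution_eq_norm_schrodingerSum (N m : ℕ) (t x y : ℝ) :
    ‖∑ η ∈ range m, exp (I * ((x : ℂ) * (N : ℂ) + (y : ℂ) * (η : ℂ) +
        (t : ℂ) * ((N : ℂ) ^ 3 - (η : ℂ) ^ 2 / (N : ℂ))))‖ = ‖schrodingerSum N m t y‖ := by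
  calc _ = ‖∑ η ∈ range m, exp (I * (((x * N + t * N ^ 3 : ℝ) : ℂ) +
          ((y : ℂ) * η - t * η ^ 2 / N)))‖ := by
        congr 1; exact sum_congr rfl fun η _ => by push_cast; ring_nf
    _ = _ := norm_sum_exp_I_mul_ofReal_add _ _ _

theorem norm_schrodingerSum_ge {N K : ℕ} (hK : K ^ 2 ≤ N) {t y : ℝ} (ht : |t| ≤ 1)
    (hy : y ∈ Set.Icc 0 (1 / (8 * ((K : ℝ) + 1)))) :
    ((K : ℝ) + 1) / 3 ≤ ‖schrodingerSum N (K + 1) t y‖ := by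
  obtain ⟨hy0, hy1⟩ := hy
  have hphase : ∀ η ∈ range (K + 1), |y * η - t * η ^ 2 / N| ≤ 9 / 8 := by
    intro η hη
    have hηK : (η : ℝ) ≤ K := by exact_mod_cast Nat.lt_succ_iff.mp (mem_range.mp hη)
    have hyη : y * η ≤ 1 / 8 := by
      calc y * η ≤ 1 / (8 * (K + 1)) * (K + 1) := by gcongr; linarith
        _ = 1 / 8 := by field_simp
    have hη2 : (η : ℝ) ^ 2 / N ≤ 1 :=
      div_le_one_of_le₀
        (by exact_mod_cast (Nat.pow_le_pow_left (by exact_mod_cast hηK) 2).trans hK)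
        (Nat.cast_nonneg N)
    have htη : |t * (η ^ 2 / N)| ≤ 1 := by
      rw [abs_mul, abs_of_nonneg (by positivity : (0 : ℝ) ≤ η ^ 2 / N)]
      exact mul_le_one₀ ht (by positivity) hη2
    rw [mul_div_assoc]
    obtain ⟨hlow, hupp⟩ := abs_le.mp htη
    exact abs_le.mpr ⟨by nlinarith, by nlinarith⟩
  have hcos : (1 : ℝ) / 3 ≤ Real.cos (9 / 8) := by
    nlinarith [Real.one_sub_sq_div_two_le_cos (x := 9 / 8)]
  calc ((K : ℝ) + 1) / 3 ≤ #(range (K + 1)) * Real.cos (9 / 8) := by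
        rw [card_range]; push_cast; nlinarith
    _ ≤ ‖schrodingerSum N (K + 1) t y‖ := by
        unfold schrodingerSum
        convert card_mul_cos_le_norm_sum_exp _ _ (by linarith [Real.pi_gt_three]) hphase
          using 3 with η
        push_cast; ring_nf

theorem integral_norm_schrodingerSum_pow_four_ge {N K : ℕ} (hK : K ^ 2 ≤ N) {t : ℝ}
    (ht : |t| ≤ 1) :
    ((K : ℝ) + 1) ^ 3 / 648 ≤ ∫ y in (0 : ℝ)..2 * π, ‖schrodingerSum N (K + 1) t y‖ ^ 4 := by
  have hcont : Continuous fun y => ‖schrodingerSum N (K + 1) t y‖ ^ 4 :=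
    ((continuous_schrodingerSum N (K + 1)).comp
      (continuous_const.prodMk continuous_id)).norm.pow 4
  have hlen : 1 / (8 * ((K : ℝ) + 1)) ≤ 2 * π :=
    calc _ ≤ 1 := by rw [div_le_one (by positivity)]; linarith [K.cast_nonneg (α := ℝ)]
      _ ≤ 2 * π := by linarith [Real.pi_gt_three]
  calc ((K : ℝ) + 1) ^ 3 / 648 = 1 / (8 * ((K : ℝ) + 1)) * (((K : ℝ) + 1) / 3) ^ 4 := by
        field_simp; ring
    _ ≤ _ := mul_le_integral_of_le_on_Icc hcont (by positivity) hlen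
        (fun y hy => pow_le_pow_left₀ (by positivity) (norm_schrodingerSum_ge hK ht hy) 4)
        (fun y _ => by positivity)

theorem integral_norm_sum_exp_sq (m : ℕ) :
    ∫ y in (0 : ℝ)..2 * π, ‖∑ η ∈ range m, exp (I * ((y : ℂ) * (η : ℂ)))‖ ^ 2 = 2 * π * m := by
  simpa [sum_map] using integral_norm_sum_mul_exp_sq ((range m).map Nat.castEmbedding) fun _ => 1

theorem integral_integral_norm_testFunction_sq (N m : ℕ) :
    ∫ x in (0 : ℝ)..2 * π, ∫ y in (0 : ℝ)..2 * π,
      ‖∑ η ∈ range m, exp (I * ((x : ℂ) * (N : ℂ) + (y : ℂ) * (η : ℂ)))‖ ^ 2 =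
        (2 * π) ^ 2 * m := by
  have hphase (x y : ℝ) :
      ‖∑ η ∈ range m, exp (I * ((x : ℂ) * (N : ℂ) + (y : ℂ) * (η : ℂ)))‖ =
        ‖∑ η ∈ range m, exp (I * ((y : ℂ) * (η : ℂ)))‖ := by
    have := norm_sum_exp_I_mul_ofReal_add (range m) (x * N) fun η : ℕ => (y : ℂ) * η
    push_cast at this
    exact this
  simp_rw [hphase, integral_norm_sum_exp_sq, intervalIntegral.integral_const, smul_eq_mul]
  ring

theorem integral_integral_integral_norm_kpEvolution_pow_four_ge {N K : ℕ} (hK : K ^ 2 ≤ N) :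
    2 * π * (((K : ℝ) + 1) ^ 3 / 648) ≤
      ∫ t in (0 : ℝ)..1, ∫ x in (0 : ℝ)..2 * π, ∫ y in (0 : ℝ)..2 * π,
        ‖∑ η ∈ range (K + 1), exp (I * ((x : ℂ) * (N : ℂ) + (y : ℂ) * (η : ℂ) +
          (t : ℂ) * ((N : ℂ) ^ 3 - (η : ℂ) ^ 2 / (N : ℂ))))‖ ^ 4 := by
  simp_rw [norm_kpEvolution_eq_norm_schrodingerSum, intervalIntegral.integral_const, smul_eq_mul,
    sub_zero]
  have hcont : Continuous fun t =>
      2 * π * ∫ y in (0 : ℝ)..2 * π, ‖schrodingerSum N (K + 1) t y‖ ^ 4 :=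
    continuous_const.mul (intervalIntegral.continuous_parametric_intervalIntegral_of_continuous'
      (f := fun t y => ‖schrodingerSum N (K + 1) t y‖ ^ 4)
      ((continuous_pow 4).comp (continuous_schrodingerSum N (K + 1)).norm) _ _)
  simpa using mul_le_integral_of_le_on_Icc hcont zero_le_one le_rfl
    (fun t ht => mul_le_mul_of_nonneg_left
      (integral_norm_schrodingerSum_pow_four_ge hK (abs_le.mpr ⟨by linarith [ht.1], ht.2⟩))
      (by positivity))
    (fun t _ => mul_nonneg (by positivity)
      (intervalIntegral.integral_nonneg (by positivity) fun _ _ => by positivity))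

theorem nat_sqrt_add_one_le_two_mul_sqrt {N : ℕ} (hN : 1 ≤ N) :
    (N.sqrt : ℝ) + 1 ≤ 2 * √(N : ℝ) := by
  have : 1 ≤ √(N : ℝ) := Real.one_le_sqrt.mpr (by exact_mod_cast hN)
  linarith [Real.nat_sqrt_le_real_sqrt (a := N)]

theorem rpow_one_div_eight_pow (x : ℝ) (hx : 0 ≤ x) (k : ℕ) :
    (x ^ ((1 : ℝ) / 8)) ^ k = x ^ ((k : ℝ) / 8) := by
  rw [← Real.rpow_mul_natCast hx]; ring_nf

theorem two_pi_mul_sqrt_mem_Icc {u m : ℝ} (hlow : u ^ 4 ≤ m) (hupp : m ≤ 2 * u ^ 4) :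
    1 / 10 * u ^ 2 ≤ 2 * π * √m ∧ 2 * π * √m ≤ 10 * u ^ 2 := by
  have hm : 0 ≤ m := (by positivity : (0 : ℝ) ≤ u ^ 4).trans hlow
  have hsqrt_low : u ^ 2 ≤ √m := (Real.le_sqrt (by positivity) hm).mpr (by linarith)
  have hsqrt_upp : √m ≤ 3 / 2 * u ^ 2 := Real.sqrt_le_iff.mpr ⟨by positivity, by nlinarith⟩
  constructor <;> nlinarith [Real.pi_gt_three, Real.pi_lt_d2]

theorem mul_two_pi_mul_sqrt_pow_four_le {u m : ℝ} (hm : 0 ≤ m) (hlow : u ^ 4 ≤ m) :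
    (1 / 100 * u * (2 * π * √m)) ^ 4 ≤ 2 * π * (m ^ 3 / 648) := by
  have hsq : √m ^ 2 = m := Real.sq_sqrt hm
  have hπ3 : π ^ 3 ≤ 4 ^ 3 := pow_le_pow_left₀ (by positivity) (by linarith [Real.pi_lt_four]) 3
  calc (1 / 100 * u * (2 * π * √m)) ^ 4 = π * u ^ 4 * m ^ 2 * (16 * π ^ 3 / 10 ^ 8) := by
        linear_combination (16 / 10 ^ 8 * π ^ 4 * u ^ 4 * (√m ^ 2 + m)) * hsq
    _ ≤ π * m * m ^ 2 * (2 / 648) := by gcongr π * ?_ * m ^ 2 * ?_; linarith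
    _ = 2 * π * (m ^ 3 / 648) := by ring

/-- Sharpness example for the `L⁴` Strichartz estimate: the test function with
Fourier support `{ξ = N, 0 ≤ η ≤ N^{1/2}}` has `L²`-norm `∼ N^{1/4}`, its
KP-II evolution has modulus given by a one-dimensional Schrödinger sum, whose
`L⁴_y`-norm is `≳ N^{3/8}` for `|t| ≤ c/N`; consequently
`‖S_KP(t)f‖_{L⁴([0,1]×𝕋²)} ≳ N^{1/8}‖f‖_{L²}`. -/
theorem strichartz_sharpness_example :
    ∃ c > (0 : ℝ), ∃ c' > (0 : ℝ), ∃ c'' > (0 : ℝ), ∀ N : ℕ, 1 ≤ N →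
      let K : ℕ := Nat.sqrt N
      let f : ℝ → ℝ → ℂ := fun x y =>
        ∑ η ∈ Finset.range (K + 1),
          Complex.exp (Complex.I * ((x : ℂ) * (N : ℂ) + (y : ℂ) * (η : ℂ)))
      let S : ℝ → ℝ → ℝ → ℂ := fun t x y =>
        ∑ η ∈ Finset.range (K + 1),
          Complex.exp (Complex.I * ((x : ℂ) * (N : ℂ) + (y : ℂ) * (η : ℂ) +
            (t : ℂ) * ((N : ℂ) ^ 3 - (η : ℂ) ^ 2 / (N : ℂ))))
      let l2f : ℝ := Real.sqrt (∫ x in (0 : ℝ)..(2 * Real.pi),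
        ∫ y in (0 : ℝ)..(2 * Real.pi), ‖f x y‖ ^ 2)
      (c * (N : ℝ) ^ ((1 : ℝ)/4) ≤ l2f ∧ l2f ≤ c⁻¹ * (N : ℝ) ^ ((1 : ℝ)/4)) ∧
      (∀ t x y : ℝ, |t| ≤ c / N →
        ‖S t x y‖ =
          ‖∑ η ∈ Finset.range (K + 1),
            Complex.exp (Complex.I * ((y : ℂ) * (η : ℂ) -
              (t : ℂ) * (η : ℂ) ^ 2 / (N : ℂ)))‖) ∧
      (∀ t : ℝ, |t| ≤ c / N →
        (c' * (N : ℝ) ^ ((3 : ℝ)/8)) ^ 4 ≤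
          ∫ y in (0 : ℝ)..(2 * Real.pi),
            ‖∑ η ∈ Finset.range (K + 1),
              Complex.exp (Complex.I * ((y : ℂ) * (η : ℂ) -
                (t : ℂ) * (η : ℂ) ^ 2 / (N : ℂ)))‖ ^ 4) ∧
      (c'' * (N : ℝ) ^ ((1 : ℝ)/8) * l2f) ^ 4 ≤
        ∫ t in (0 : ℝ)..1, ∫ x in (0 : ℝ)..(2 * Real.pi),
          ∫ y in (0 : ℝ)..(2 * Real.pi), ‖S t x y‖ ^ 4 := by
  refine ⟨1 / 10, by norm_num, 1 / 6, by norm_num, 1 / 100, by norm_num, fun N hN => ?_⟩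
  intro K f S l2f
  simp only [← rpow_one_div_eight_pow _ N.cast_nonneg,
    show ((1 : ℝ) / 4) = (2 : ℕ) / 8 by norm_num, show ((3 : ℝ) / 8) = (3 : ℕ) / 8 by norm_num,
    inv_div, div_one]
  have hK : K ^ 2 ≤ N := Nat.sqrt_le' N
  set u : ℝ := (N : ℝ) ^ ((1 : ℝ) / 8)
  have hu4 : u ^ 4 = √(N : ℝ) := by
    rw [rpow_one_div_eight_pow _ N.cast_nonneg, Real.sqrt_eq_rpow]; norm_num
  have hlow : u ^ 4 ≤ K + 1 := hu4 ▸ Real.real_sqrt_lt_nat_sqrt_succ.le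
  have hupp : (K : ℝ) + 1 ≤ 2 * u ^ 4 := hu4 ▸ nat_sqrt_add_one_le_two_mul_sqrt hN
  have hl2f : l2f = 2 * π * √((K : ℝ) + 1) := by
    change √_ = _
    rw [integral_integral_norm_testFunction_sq, Real.sqrt_mul' _ (by positivity),
      Real.sqrt_sq (by positivity)]
    push_cast; rfl
  have hpow_le : (1 / 6 * u ^ 3) ^ 4 ≤ ((K : ℝ) + 1) ^ 3 / 648 := by
    have := pow_le_pow_left₀ (by positivity) hlow 3
    ring_nf at this ⊢
    linarith [(by positivity : 0 ≤ u ^ 12)]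
  have hsmall_t (t : ℝ) (ht : |t| ≤ 1 / 10 / N) : |t| ≤ 1 :=
    ht.trans (div_le_one_of_le₀ (by linarith [(Nat.one_le_cast (α := ℝ)).mpr hN]) (by positivity))
  refine ⟨hl2f ▸ two_pi_mul_sqrt_mem_Icc hlow hupp,
    fun t x y _ => norm_kpEvolution_eq_norm_schrodingerSum N (K + 1) t x y,
    fun t ht => hpow_le.trans (integral_norm_schrodingerSum_pow_four_ge hK (hsmall_t t ht)),
    hl2f ▸ (mul_two_pi_mul_sqrt_pow_four_le (by positivity) hlow).trans
      (integral_integral_integral_norm_kpEvolution_pow_four_ge hK)⟩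
end
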